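/- Let Γ be an injective compressed LOT, Γ₁ a maximal proper sub-LOT with compressed quotient Γ̄₁, and Γ̄₂ a maximal proper sub-LOT of Γ̄₁ whose collapse Γ̄₁₂ is not compressed. Then Γ freely decomposes, i.e., Γ = Γ_L ∪ Γ_R where Γ_L and Γ_R are proper sub-LOTs of Γ intersecting in a single vertex. -/

import Mathlib

/-- A labeled oriented graph (LOG): an oriented graph whose edges are labeled by vertices.
A labeled oriented tree (LOT) is a LOG satisfying `IsTree`. -/
structure LOG where
  V : Type
  E : Type
  src : E → V
  tgt : E → V
  lab : E → V

namespace LOG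

variable (G : LOG)

/-- Adjacency in the underlying undirected graph. -/
def Adj (v w : G.V) : Prop :=
  ∃ e, (G.src e = v ∧ G.tgt e = w) ∨ (G.src e = w ∧ G.tgt e = v)

/-- Adjacency using only edges from `S`. -/
def AdjOn (S : Set G.E) (v w : G.V) : Prop :=
  ∃ e ∈ S, (G.src e = v ∧ G.tgt e = w) ∨ (G.src e = w ∧ G.tgt e = v)

/-- The vertices incident to an edge set. -/
def verts (S : Set G.E) : Set G.V := {v | ∃ e ∈ S, G.src e = v ∨ G.tgt e = v}

/-- Connectivity of the subgraph spanned by the edge set `S`. -/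
def ConnOn (S : Set G.E) : Prop :=
  ∀ v ∈ G.verts S, ∀ w ∈ G.verts S, Relation.ReflTransGen (G.AdjOn S) v w

/-- The underlying graph is a finite tree: connected, without loops or multiple edges,
and with one more vertex than edges. -/
def IsTree : Prop :=
  Finite G.V ∧ Finite G.E ∧ Nonempty G.V ∧
  (∀ v w : G.V, Relation.ReflTransGen G.Adj v w) ∧
  (∀ e, G.src e ≠ G.tgt e) ∧
  (∀ e e', ({G.src e, G.tgt e} : Set G.V) = {G.src e', G.tgt e'} → e = e') ∧
  Nat.card G.V = Nat.card G.E + 1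

/-- No edge is labeled with one of its own endpoints. -/
def Compressed : Prop := ∀ e, G.lab e ≠ G.src e ∧ G.lab e ≠ G.tgt e

/-- Each vertex occurs as an edge label at most once. -/
def Inj : Prop := ∀ e e', G.lab e = G.lab e' → e = e'

/-- A leaf (boundary vertex): a vertex incident with exactly one edge. -/
def IsLeaf (v : G.V) : Prop := {e | G.src e = v ∨ G.tgt e = v}.ncard = 1

/-- Every boundary vertex occurs as an edge label. -/
def BoundaryReduced : Prop := ∀ v, G.IsLeaf v → ∃ e, G.lab e = v

/-- Reduced: compressed and boundary reduced. -/
def Reduced : Prop := G.Compressed ∧ G.BoundaryReduced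

/-- A sub-LOT, given by a nonempty connected set of edges all of whose labels are
vertices of the subgraph. -/
def IsSubLOT (S : Set G.E) : Prop :=
  S.Nonempty ∧ G.ConnOn S ∧ ∀ e ∈ S, G.lab e ∈ G.verts S

/-- A proper sub-LOT. -/
def ProperSubLOT (S : Set G.E) : Prop := G.IsSubLOT S ∧ S ≠ Set.univ

/-- A maximal proper sub-LOT. -/
def MaxProperSubLOT (S : Set G.E) : Prop :=
  G.ProperSubLOT S ∧ ∀ T, G.ProperSubLOT T → S ⊆ T → S = T

/-- A prime LOG: one with no proper sub-LOT. -/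
def Prime : Prop := ∀ S, ¬ G.ProperSubLOT S

/-- A LOG freely decomposes if it is the union of two proper sub-LOTs meeting in a
single vertex. -/
def FreelyDecomposes : Prop :=
  ∃ (SL SR : Set G.E) (x : G.V), G.ProperSubLOT SL ∧ G.ProperSubLOT SR ∧
    SL ∪ SR = Set.univ ∧ G.verts SL ∩ G.verts SR = {x}

/-- The map collapsing the vertices of the subgraph spanned by `S` to the vertex `x`. -/
noncomputable def collapseMap (S : Set G.E) (x : G.V) : G.V → G.V :=
  fun v => letI := Classical.dec (v ∈ G.verts S); if v ∈ G.verts S then x else v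

/-- The quotient LOG obtained by collapsing the sub-LOT `S` to the vertex `x`
(the vertex of `S` not occurring as an edge label of `S`).  The edges are the edges
outside `S`; endpoints and labels are pushed forward along the collapse map. -/
noncomputable def collapse (S : Set G.E) (x : G.V) : LOG where
  V := G.V
  E := {e : G.E // e ∉ S}
  src e := G.collapseMap S x (G.src e.1)
  tgt e := G.collapseMap S x (G.tgt e.1)
  lab e := G.collapseMap S x (G.lab e.1)

end LOG

/-!
An edge `e` of `Γ̄₁` witnessing that `Γ̄₁₂` is not compressed has its label and one endpoint in
`Γ̄₂` (the quotient `Γ̄₁` being compressed), so `Γ̄₂ ∪ {e}` is a sub-LOT of `Γ̄₁` and hence, by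
maximality, all of `Γ̄₁`. The collapse vertex `x₁` does not lie in `Γ̄₂`: otherwise `Γ₁` together
with the preimage of `Γ̄₂` would be a sub-LOT of `Γ` lying strictly between `Γ₁` and `Γ`.
Hence `Γ̄₂` lifts isomorphically to a sub-LOT of `Γ` disjoint from `Γ₁`, and `Γ_L = Γ₁`,
`Γ_R = Γ̄₂ ∪ {e}` is a free decomposition; the two meet in the endpoint of `e` lying in `Γ₁`,
which exists because `Γ` is connected.
-/

open Relation Set

theorem Relation.ReflTransGen.exists_boundary {α : Type*} {r : α → α → Prop} {s : Set α}
    {a b : α} (h : ReflTransGen r a b) (ha : a ∈ s) (hb : b ∉ s) :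
    ∃ c d, r c d ∧ c ∈ s ∧ d ∉ s := by
  induction h with
  | refl => exact absurd ha hb
  | @tail c d _ hcd ih =>
    by_cases hc : c ∈ s
    · exact ⟨c, d, hcd, hc, hb⟩
    · exact ih hc

namespace LOG

variable {G : LOG}

instance (S : Set G.E) : Std.Symm (G.AdjOn S) where
  symm _ _ := fun ⟨e, he, h⟩ => ⟨e, he, h.symm⟩

lemma adjOn_mono {S T : Set G.E} (hST : S ⊆ T) : G.AdjOn S ≤ G.AdjOn T :=
  fun _ _ ⟨e, he, h⟩ => ⟨e, hST he, h⟩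

lemma verts_mono {S T : Set G.E} (hST : S ⊆ T) : G.verts S ⊆ G.verts T :=
  fun _ ⟨e, he, h⟩ => ⟨e, hST he, h⟩

@[simp]
lemma mem_verts_singleton {e : G.E} {v : G.V} :
    v ∈ G.verts {e} ↔ G.src e = v ∨ G.tgt e = v := by
  simp [verts]

lemma verts_insert (e : G.E) (S : Set G.E) :
    G.verts (insert e S) = G.verts {e} ∪ G.verts S := by
  ext v
  simp [verts]

lemma inter_verts_singleton_eq {A : Set G.V} {e : G.E} {u t : G.V}
    (hu : u ∈ G.verts {e}) (huA : u ∉ A) (ht : t ∈ G.verts {e}) (htA : t ∈ A) :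
    A ∩ G.verts {e} = {t} := by
  ext v
  simp only [mem_verts_singleton, mem_inter_iff, mem_singleton_iff] at hu ht ⊢
  grind

lemma reflTransGen_adjOn_of_mem_verts_singleton {S : Set G.E} {e : G.E} (he : e ∈ S)
    {v w : G.V} (hv : v ∈ G.verts {e}) (hw : w ∈ G.verts {e}) :
    ReflTransGen (G.AdjOn S) v w := by
  rw [mem_verts_singleton] at hv hw
  rcases hv with rfl | rfl <;> rcases hw with rfl | rfl
  · rfl
  · exact .single ⟨e, he, .inl ⟨rfl, rfl⟩⟩
  · exact .single ⟨e, he, .inr ⟨rfl, rfl⟩⟩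
  · rfl

lemma connOn_of_forall_reflTransGen {S : Set G.E} {p : G.V}
    (h : ∀ v ∈ G.verts S, ReflTransGen (G.AdjOn S) v p) : G.ConnOn S :=
  fun v hv w hw => (h v hv).trans (symm (h w hw))

lemma exists_notMem_inter_verts_nonempty (hconn : ∀ v w, ReflTransGen G.Adj v w)
    {S : Set G.E} (hne : S.Nonempty) (hS : S ≠ univ) :
    ∃ e ∉ S, (G.verts {e} ∩ G.verts S).Nonempty := by
  obtain ⟨f, hf⟩ := hne
  obtain ⟨g, hg⟩ := (ne_univ_iff_exists_notMem S).1 hS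
  by_cases hgS : G.src g ∈ G.verts S
  · exact ⟨g, hg, G.src g, by simp, hgS⟩
  obtain ⟨a, b, ⟨e, hab⟩, ha, hb⟩ :=
    (hconn (G.src f) (G.src g)).exists_boundary (s := G.verts S) ⟨f, hf, .inl rfl⟩ hgS
  refine ⟨e, fun he => hb ⟨e, he, ?_⟩, a, ?_, ha⟩ <;>
    rcases hab with ⟨rfl, rfl⟩ | ⟨rfl, rfl⟩ <;> simp

lemma IsSubLOT.insert_edge {S : Set G.E} (hS : G.IsSubLOT S) {e : G.E}
    (hend : (G.verts {e} ∩ G.verts S).Nonempty) (hlab : G.lab e ∈ G.verts S) :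
    G.IsSubLOT (insert e S) := by
  obtain ⟨hne, hconn, hlabS⟩ := hS
  obtain ⟨p, hpe, hpS⟩ := hend
  have hsub : S ⊆ insert e S := subset_insert e S
  refine ⟨hne.mono hsub, connOn_of_forall_reflTransGen (p := p) fun v hv => ?_, ?_⟩
  · rcases (verts_insert e S ▸ hv : v ∈ G.verts {e} ∪ G.verts S) with hv | hv
    · exact reflTransGen_adjOn_of_mem_verts_singleton (mem_insert e S) hv hpe
    · exact ReflTransGen.mono (adjOn_mono hsub) _ _ (hconn v hv p hpS)
  · rintro f (rfl | hf)
    · exact verts_mono hsub hlab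
    · exact verts_mono hsub (hlabS f hf)

lemma MaxProperSubLOT.insert_eq_univ {S : Set G.E} (hS : G.MaxProperSubLOT S) {e : G.E}
    (he : e ∉ S) (hend : (G.verts {e} ∩ G.verts S).Nonempty) (hlab : G.lab e ∈ G.verts S) :
    insert e S = univ := by
  by_contra hne
  have hSe := hS.2 _ ⟨hS.1.1.insert_edge hend hlab, hne⟩ (subset_insert e S)
  exact he (hSe ▸ mem_insert e S)

lemma freelyDecomposes_of_disjoint (hconn : ∀ v w, ReflTransGen G.Adj v w)
    {S R : Set G.E} (hS : G.IsSubLOT S) (hR : G.IsSubLOT R)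
    (hSR : Disjoint (G.verts S) (G.verts R)) {e : G.E} (he : e ∉ S)
    (hlab : G.lab e ∈ G.verts R) (hend : (G.verts {e} ∩ G.verts R).Nonempty)
    (hcover : S ∪ insert e R = univ) : G.FreelyDecomposes := by
  have hS_ne : S ≠ univ := fun h => he (h ▸ mem_univ e)
  have hR_ne : insert e R ≠ univ := fun h => by
    obtain ⟨f, hf⟩ := hS.1
    rcases h ▸ mem_univ f with rfl | hfR
    · exact he hf
    · exact disjoint_left.1 hSR ⟨f, hf, .inl rfl⟩ ⟨f, hfR, .inl rfl⟩
  obtain ⟨e', he'S, t, hte', htS⟩ := exists_notMem_inter_verts_nonempty hconn hS.1 hS_ne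
  have hte : t ∈ G.verts {e} := by
    rcases hcover ▸ mem_univ e' with h | rfl | h
    · exact absurd h he'S
    · exact hte'
    · exact absurd (verts_mono (singleton_subset_iff.2 h) hte') (disjoint_left.1 hSR htS)
  refine ⟨S, insert e R, t, ⟨hS, hS_ne⟩, ⟨hR.insert_edge hend hlab, hR_ne⟩, hcover, ?_⟩
  obtain ⟨u, hue, huR⟩ := hend
  rw [verts_insert, inter_union_distrib_left, hSR.inter_eq, union_empty]
  exact inter_verts_singleton_eq hue (disjoint_right.1 hSR huR) hte htS

section Collapse

variable {S : Set G.E} {x : G.V}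

lemma collapseMap_of_mem {v : G.V} (hv : v ∈ G.verts S) : G.collapseMap S x v = x := if_pos hv

lemma collapseMap_of_notMem {v : G.V} (hv : v ∉ G.verts S) : G.collapseMap S x v = v :=
  if_neg hv

lemma notMem_verts_of_collapseMap_mem {A : Set G.V} {v : G.V}
    (hv : G.collapseMap S x v ∈ A) (hxA : x ∉ A) : v ∉ G.verts S :=
  fun h => hxA (by rwa [collapseMap_of_mem h] at hv)

lemma mem_verts_of_collapseMap_eq (hx : x ∈ G.verts S) {a b : G.V}
    (h : G.collapseMap S x a = G.collapseMap S x b) (hab : a ≠ b) :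
    a ∈ G.verts S ∧ b ∈ G.verts S := by
  by_cases ha : a ∈ G.verts S <;> by_cases hb : b ∈ G.verts S
  · exact ⟨ha, hb⟩
  · rw [collapseMap_of_mem ha, collapseMap_of_notMem hb] at h
    exact absurd (h ▸ hx) hb
  · rw [collapseMap_of_notMem ha, collapseMap_of_mem hb] at h
    exact absurd (h ▸ hx) ha
  · rw [collapseMap_of_notMem ha, collapseMap_of_notMem hb] at h
    exact absurd h hab

@[simp]
lemma collapse_src (e : (G.collapse S x).E) :
    (G.collapse S x).src e = G.collapseMap S x (G.src e.1) := rfl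

@[simp]
lemma collapse_tgt (e : (G.collapse S x).E) :
    (G.collapse S x).tgt e = G.collapseMap S x (G.tgt e.1) := rfl

lemma exists_notMem_of_not_compressed_collapse (hC : G.Compressed) (hx : x ∈ G.verts S)
    (hnc : ¬ (G.collapse S x).Compressed) :
    ∃ e ∉ S, G.lab e ∈ G.verts S ∧ (G.verts {e} ∩ G.verts S).Nonempty := by
  by_contra hno
  refine hnc fun e => ⟨fun h => ?_, fun h => ?_⟩
  · obtain ⟨hl, hs⟩ := mem_verts_of_collapseMap_eq hx h (hC e.1).1
    exact hno ⟨e.1, e.2, hl, G.src e.1, by simp, hs⟩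
  · obtain ⟨hl, ht⟩ := mem_verts_of_collapseMap_eq hx h (hC e.1).2
    exact hno ⟨e.1, e.2, hl, G.tgt e.1, by simp, ht⟩

lemma verts_collapse (U : Set (G.collapse S x).E) :
    (G.collapse S x).verts U = G.collapseMap S x '' G.verts (Subtype.val '' U) := by
  ext v
  constructor
  · rintro ⟨e, he, rfl | rfl⟩
    · exact ⟨G.src e.1, ⟨e.1, ⟨e, he, rfl⟩, .inl rfl⟩, rfl⟩
    · exact ⟨G.tgt e.1, ⟨e.1, ⟨e, he, rfl⟩, .inr rfl⟩, rfl⟩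
  · rintro ⟨w, ⟨_, ⟨e, he, rfl⟩, rfl | rfl⟩, rfl⟩
    · exact ⟨e, he, .inl rfl⟩
    · exact ⟨e, he, .inr rfl⟩

lemma mem_verts_collapse_of_ne {U : Set (G.collapse S x).E} {v : G.V}
    (hv : v ∈ (G.collapse S x).verts U) (hvx : v ≠ x) :
    v ∈ G.verts (Subtype.val '' U) ∧ v ∉ G.verts S := by
  rw [verts_collapse] at hv
  obtain ⟨w, hw, rfl⟩ := hv
  by_cases hwS : w ∈ G.verts S
  · exact absurd (collapseMap_of_mem hwS) hvx
  · rw [collapseMap_of_notMem hwS]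
    exact ⟨hw, hwS⟩

variable {T : Set (G.collapse S x).E}

lemma verts_collapse_eq_of_notMem (hxT : x ∉ (G.collapse S x).verts T) :
    (G.collapse S x).verts T = G.verts (Subtype.val '' T) := by
  ext v
  refine ⟨fun hv => (mem_verts_collapse_of_ne hv (ne_of_mem_of_not_mem hv hxT)).1, fun hv => ?_⟩
  have hcv : G.collapseMap S x v ∈ (G.collapse S x).verts T :=
    verts_collapse T ▸ mem_image_of_mem _ hv
  rwa [collapseMap_of_notMem (notMem_verts_of_collapseMap_mem hcv hxT)] at hcv

lemma disjoint_verts_image_val (hxT : x ∉ (G.collapse S x).verts T) :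
    Disjoint (G.verts S) (G.verts (Subtype.val '' T)) := by
  refine disjoint_left.2 fun v hvS hv => ?_
  rw [← verts_collapse_eq_of_notMem hxT] at hv
  exact (mem_verts_collapse_of_ne hv (ne_of_mem_of_not_mem hv hxT)).2 hvS

lemma mem_verts_image_val_of_collapseMap_mem (hxT : x ∉ (G.collapse S x).verts T) {v : G.V}
    (hv : G.collapseMap S x v ∈ (G.collapse S x).verts T) : v ∈ G.verts (Subtype.val '' T) := by
  rwa [collapseMap_of_notMem (notMem_verts_of_collapseMap_mem hv hxT),
    verts_collapse_eq_of_notMem hxT] at hv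

lemma inter_verts_singleton_val_nonempty (hxT : x ∉ (G.collapse S x).verts T)
    {e : (G.collapse S x).E}
    (h : ((G.collapse S x).verts {e} ∩ (G.collapse S x).verts T).Nonempty) :
    (G.verts {e.1} ∩ G.verts (Subtype.val '' T)).Nonempty := by
  obtain ⟨v, hve, hvT⟩ := h
  obtain ⟨_, ⟨g, hg, rfl⟩, hv⟩ := (mem_verts_collapse_of_ne hve (ne_of_mem_of_not_mem hvT hxT)).1
  rw [mem_singleton_iff.1 hg] at hv
  exact ⟨v, ⟨e.1, rfl, hv⟩, verts_collapse_eq_of_notMem hxT ▸ hvT⟩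

lemma IsSubLOT.image_val (hT : (G.collapse S x).IsSubLOT T)
    (hxT : x ∉ (G.collapse S x).verts T) : G.IsSubLOT (Subtype.val '' T) := by
  obtain ⟨hne, hconn, hlab⟩ := hT
  have hid : ∀ {v}, G.collapseMap S x v ∈ (G.collapse S x).verts T → G.collapseMap S x v = v :=
    fun hv => collapseMap_of_notMem (notMem_verts_of_collapseMap_mem hv hxT)
  have hstep : (G.collapse S x).AdjOn T ≤ G.AdjOn (Subtype.val '' T) := by
    rintro a b ⟨f, hf, h⟩
    have hs : G.collapseMap S x (G.src f.1) ∈ (G.collapse S x).verts T := ⟨f, hf, .inl rfl⟩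
    have ht : G.collapseMap S x (G.tgt f.1) ∈ (G.collapse S x).verts T := ⟨f, hf, .inr rfl⟩
    simp only [collapse_src, collapse_tgt, hid hs, hid ht] at h
    exact ⟨f.1, ⟨f, hf, rfl⟩, h⟩
  refine ⟨hne.image _, fun v hv w hw => ?_, ?_⟩
  · rw [← verts_collapse_eq_of_notMem hxT] at hv hw
    exact ReflTransGen.mono hstep _ _ (hconn v hv w hw)
  · rintro _ ⟨f, hf, rfl⟩
    exact mem_verts_image_val_of_collapseMap_mem hxT (hlab f hf)

lemma IsSubLOT.union_image_val (hS : G.IsSubLOT S) (hx : x ∈ G.verts S)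
    (hT : (G.collapse S x).IsSubLOT T) (hxT : x ∈ (G.collapse S x).verts T) :
    G.IsSubLOT (S ∪ Subtype.val '' T) := by
  obtain ⟨hSne, hSconn, hSlab⟩ := hS
  obtain ⟨-, hTconn, hTlab⟩ := hT
  set U := S ∪ Subtype.val '' T
  have hSU : S ⊆ U := subset_union_left
  have hTU : Subtype.val '' T ⊆ U := subset_union_right
  have hpathS : ∀ {v w}, v ∈ G.verts S → w ∈ G.verts S → ReflTransGen (G.AdjOn U) v w :=
    fun hv hw => ReflTransGen.mono (adjOn_mono hSU) _ _ (hSconn _ hv _ hw)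
  have hfiber : ∀ p, ReflTransGen (G.AdjOn U) (G.collapseMap S x p) p := by
    intro p
    by_cases hp : p ∈ G.verts S
    · rw [collapseMap_of_mem hp]
      exact hpathS hx hp
    · rw [collapseMap_of_notMem hp]
  have hedge : ∀ f ∈ T, ReflTransGen (G.AdjOn U)
      (G.collapseMap S x (G.src f.1)) (G.collapseMap S x (G.tgt f.1)) := by
    intro f hf
    have hf' : G.AdjOn U (G.src f.1) (G.tgt f.1) := ⟨f.1, hTU ⟨f, hf, rfl⟩, .inl ⟨rfl, rfl⟩⟩
    exact (hfiber _).trans ((ReflTransGen.single hf').trans (symm (hfiber _)))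
  have hlift : (G.collapse S x).AdjOn T ≤ ReflTransGen (G.AdjOn U) := by
    rintro a b ⟨f, hf, ⟨rfl, rfl⟩ | ⟨rfl, rfl⟩⟩
    · exact hedge f hf
    · exact (symm (hedge f hf) : ReflTransGen (G.AdjOn U) _ _)
  refine ⟨hSne.mono hSU, connOn_of_forall_reflTransGen (p := x) ?_, ?_⟩
  · rintro v ⟨f, hf | ⟨g, hg, rfl⟩, hv⟩
    · exact hpathS ⟨f, hf, hv⟩ hx
    · have hvT : G.collapseMap S x v ∈ (G.collapse S x).verts T := by
        rcases hv with rfl | rfl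
        exacts [⟨g, hg, .inl rfl⟩, ⟨g, hg, .inr rfl⟩]
      exact (symm (hfiber v)).trans (reflTransGen_closed hlift _ _ (hTconn _ hvT x hxT))
  · rintro f (hf | ⟨g, hg, rfl⟩)
    · exact verts_mono hSU (hSlab f hf)
    by_cases hl : G.lab g.1 ∈ G.verts S
    · exact verts_mono hSU hl
    have h : G.collapseMap S x (G.lab g.1) ∈ (G.collapse S x).verts T := hTlab g hg
    rw [collapseMap_of_notMem hl] at h
    exact verts_mono hTU (mem_verts_collapse_of_ne h fun h' => hl (h' ▸ hx)).1

lemma union_insert_image_val_eq_univ {e : (G.collapse S x).E} (h : insert e T = univ) :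
    S ∪ insert e.1 (Subtype.val '' T) = univ := by
  refine eq_univ_of_forall fun f => (em (f ∈ S)).imp id fun hf => ?_
  rcases h ▸ mem_univ (⟨f, hf⟩ : (G.collapse S x).E) with h | h
  · exact .inl (congrArg Subtype.val h)
  · exact .inr ⟨_, h, rfl⟩

lemma MaxProperSubLOT.notMem_verts_collapse (hS : G.MaxProperSubLOT S) (hx : x ∈ G.verts S)
    (hT : (G.collapse S x).ProperSubLOT T) : x ∉ (G.collapse S x).verts T := by
  intro hxT
  have hU := hS.1.1.union_image_val hx hT.1 hxT
  by_cases huniv : S ∪ Subtype.val '' T = univ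
  · refine hT.2 (eq_univ_of_forall fun f => ?_)
    obtain hf | ⟨g, hg, hgf⟩ := huniv ▸ mem_univ f.1
    · exact absurd hf f.2
    · rwa [Subtype.ext hgf] at hg
  · obtain ⟨f, hf⟩ := hT.1.1
    have hSU := hS.2 _ ⟨hU, huniv⟩ subset_union_left
    have hfU : f.1 ∈ S ∪ Subtype.val '' T := .inr ⟨f, hf, rfl⟩
    rw [← hSU] at hfU
    exact f.2 hfU

end Collapse

end LOG

theorem two_stage_collapse_free_decomposition_general
    (G : LOG) (hT : G.IsTree)
    (S₁ : Set G.E) (hS₁ : G.MaxProperSubLOT S₁)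
    (x₁ : G.V) (hx₁ : x₁ ∈ G.verts S₁)
    (hQ₁ : (G.collapse S₁ x₁).Compressed)
    (S₂ : Set (G.collapse S₁ x₁).E) (hS₂ : (G.collapse S₁ x₁).MaxProperSubLOT S₂)
    (x₂ : (G.collapse S₁ x₁).V) (hx₂ : x₂ ∈ (G.collapse S₁ x₁).verts S₂)
    (hQ₁₂ : ¬ ((G.collapse S₁ x₁).collapse S₂ x₂).Compressed) :
    G.FreelyDecomposes := by
  obtain ⟨e, he, hlab, hend⟩ := LOG.exists_notMem_of_not_compressed_collapse hQ₁ hx₂ hQ₁₂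
  have hx₁S₂ : x₁ ∉ (G.collapse S₁ x₁).verts S₂ := hS₁.notMem_verts_collapse hx₁ hS₂.1
  exact LOG.freelyDecomposes_of_disjoint hT.2.2.2.1 hS₁.1.1 (hS₂.1.1.image_val hx₁S₂)
    (LOG.disjoint_verts_image_val hx₁S₂) e.2
    (LOG.mem_verts_image_val_of_collapseMap_mem hx₁S₂ hlab)
    (LOG.inter_verts_singleton_val_nonempty hx₁S₂ hend)
    (LOG.union_insert_image_val_eq_univ (hS₂.insert_eq_univ he hend hlab))

/-- Let `Γ` be an injective compressed LOT, `Γ₁` (edge set `S₁`, collapsed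
to the vertex `x₁`) a maximal proper sub-LOT with compressed quotient `Γ̄₁`, and `Γ̄₂`
(edge set `S₂`, collapsed to `x₂`) a maximal proper sub-LOT of `Γ̄₁` whose collapse `Γ̄₁₂`
is not compressed.  Then `Γ` freely decomposes: `Γ = Γ_L ∪ Γ_R` with `Γ_L, Γ_R` proper
sub-LOTs intersecting in a single vertex. -/
theorem two_stage_collapse_free_decomposition
    (G : LOG) (hT : G.IsTree) (hC : G.Compressed) (hI : G.Inj)
    (S₁ : Set G.E) (hS₁ : G.MaxProperSubLOT S₁)
    (x₁ : G.V) (hx₁ : x₁ ∈ G.verts S₁) (hx₁lab : ∀ e ∈ S₁, G.lab e ≠ x₁)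
    (hQ₁ : (G.collapse S₁ x₁).Compressed)
    (S₂ : Set (G.collapse S₁ x₁).E) (hS₂ : (G.collapse S₁ x₁).MaxProperSubLOT S₂)
    (x₂ : (G.collapse S₁ x₁).V) (hx₂ : x₂ ∈ (G.collapse S₁ x₁).verts S₂)
    (hx₂lab : ∀ e ∈ S₂, (G.collapse S₁ x₁).lab e ≠ x₂)
    (hQ₁₂ : ¬ ((G.collapse S₁ x₁).collapse S₂ x₂).Compressed) :
    G.FreelyDecomposes :=
  two_stage_collapse_free_decomposition_general G hT S₁ hS₁ x₁ hx₁ hQ₁ S₂ hS₂ x₂ hx₂ hQ₁₂
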